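/- If Z ~ AbSLG(α,β), then E(Z³) = -(98π⁴α + 310π⁶β)/(210 + 35π²α² + 98π⁴αβ + 155π⁶β²) · 105/105, i.e., E(Z³) = -105(98π⁴α + 310π⁶β)/(105(210 + 35π²α² + 98π⁴αβ + 155π⁶β²)) = -(98π⁴α + 310π⁶β)/(210 + 35π²α² + 98π⁴αβ + 155π⁶β²). -/

import Mathlib

/-!
For `z > 0` the logistic density expands as `g z = ∑ (-1)^(n+1) n e^{-nz}`; integrating termwise
against `z^k` gives `∫_0^∞ z^k g = k! η(k)` with `η(k) = (1 - 2^{1-k}) ζ(k)`. As `g` is even, the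
even moments are `2 k! η(k)` (that is `7π⁴/15` and `31π⁶/21` for `k = 4, 6`) and the odd moments
vanish. In `z³((1 - αz - βz³)² + 1)` only the even part `-2αz⁴ - 2βz⁶` survives, so
`E Z³ = -(2α · 7π⁴/15 + 2β · 31π⁶/21) / C(α, β)`.
-/

open Real MeasureTheory Filter

noncomputable def C (α β : ℝ) : ℝ :=
  (210 + 35 * π ^ 2 * α ^ 2 + 98 * π ^ 4 * α * β + 155 * π ^ 6 * β ^ 2) / 105

noncomputable def g (z : ℝ) : ℝ := Real.exp (-z) / (1 + Real.exp (-z)) ^ 2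

noncomputable def f (z α β : ℝ) : ℝ := ((1 - α * z - β * z ^ 3) ^ 2 + 1) / C α β * g z

open Set Asymptotics
open scoped Nat

lemma bernoulli_six : bernoulli 6 = 1 / 42 := by
  rw [bernoulli_eq_bernoulli'_of_ne_one (by norm_num), bernoulli'_def]
  norm_num [Finset.sum_range_succ, Nat.choose, bernoulli'_eq_zero_of_odd (n := 5) ⟨2, rfl⟩]

lemma hasSum_zeta_six : HasSum (fun n : ℕ => 1 / (n : ℝ) ^ 6) (π ^ 6 / 945) := by
  convert hasSum_zeta_nat (k := 3) (by norm_num) using 1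
  rw [bernoulli_six]
  norm_num [Nat.factorial]
  ring

lemma HasSum.neg_one_pow_succ_mul {u : ℕ → ℝ} {S E : ℝ} (hu : HasSum u S)
    (hE : HasSum (fun n => u (2 * n)) E) :
    HasSum (fun n => (-1) ^ (n + 1) * u n) (S - 2 * E) := by
  have heven : HasSum (fun n => if Even n then u n else 0) E := by
    rw [← (mul_right_injective₀ (two_ne_zero' ℕ)).hasSum_iff]
    · simpa [Function.comp_def] using hE
    · rintro n hn
      rw [if_neg]
      rintro ⟨m, rfl⟩
      exact hn ⟨m, two_mul m⟩
  -- `(-1)^(n+1) u n = u n - 2 [n even] u n`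
  refine (hu.sub (heven.mul_left 2)).congr_fun fun n => ?_
  rcases Nat.even_or_odd n with h | h
  · simp [h, h.add_one.neg_one_pow]; ring
  · simp [Nat.not_even_iff_odd.mpr h, h.add_one.neg_one_pow]

lemma hasSum_neg_one_pow_succ_div_pow {k : ℕ} {S : ℝ}
    (hS : HasSum (fun n : ℕ => 1 / (n : ℝ) ^ k) S) :
    HasSum (fun n : ℕ => (-1) ^ (n + 1) / (n : ℝ) ^ k) (S - 2 * (S / 2 ^ k)) := by
  refine (hS.neg_one_pow_succ_mul ((hS.div_const (2 ^ k)).congr_fun fun n => ?_)).congr_fun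
    fun n => mul_one_div _ _ |>.symm
  push_cast
  rw [mul_pow, div_div, mul_comm]

lemma integral_pow_mul_exp_neg_mul_Ioi (k : ℕ) {r : ℝ} (hr : 0 < r) :
    ∫ z in Ioi 0, z ^ k * exp (-(r * z)) = k ! / r ^ (k + 1) := by
  have h := integral_rpow_mul_exp_neg_mul_Ioi (a := k + 1) (by positivity) hr
  simp only [add_sub_cancel_right, rpow_natCast] at h
  rw [h, Gamma_nat_eq_factorial, ← Nat.cast_add_one, rpow_natCast, div_pow, one_pow, pow_succ]
  ring

lemma integrableOn_pow_mul_exp_neg_mul_Ioi (k : ℕ) {r : ℝ} (hr : 0 < r) :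
    IntegrableOn (fun z => z ^ k * exp (-(r * z))) (Ioi 0) :=
  .of_integral_ne_zero <| by rw [integral_pow_mul_exp_neg_mul_Ioi k hr]; positivity

lemma g_neg (z : ℝ) : g (-z) = g z := by
  have h : exp z * exp (-z) = 1 := by rw [← exp_add, add_neg_cancel, exp_zero]
  simp only [g, neg_neg]
  field_simp
  linear_combination (exp (-z) - exp z) * h

lemma g_nonneg (z : ℝ) : 0 ≤ g z := by unfold g; positivity

lemma g_le_exp_neg (z : ℝ) : g z ≤ exp (-z) :=
  div_le_self (exp_pos _).le (one_le_pow₀ (by linarith [exp_pos (-z)]))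

lemma continuous_g : Continuous g := by
  unfold g
  exact Continuous.div (by fun_prop) (by fun_prop) fun z => by positivity

lemma hasSum_g {z : ℝ} (hz : 0 < z) :
    HasSum (fun n : ℕ => (-1) ^ (n + 1) * n * exp (-n * z)) (g z) := by
  have hq : ‖-exp (-z)‖ < 1 := by
    rw [norm_neg, norm_of_nonneg (exp_pos _).le, exp_lt_one_iff]
    linarith
  have h := (hasSum_coe_mul_geometric_of_norm_lt_one hq).neg
  rw [sub_neg_eq_add, neg_div, neg_neg] at h
  refine h.congr_fun fun n => ?_
  rw [neg_pow (exp (-z)), ← exp_nat_mul, neg_mul, mul_neg, pow_succ]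
  ring

lemma integrable_pow_mul_g (k : ℕ) : Integrable fun z => z ^ k * g z := by
  refine ((continuous_pow k).mul continuous_g).locallyIntegrable
    |>.integrable_of_isBigO_atTop_of_norm_isNegInvariant (ae_of_all _ fun z => ?_) ?_
      ⟨Ioi 0, Ioi_mem_atTop 0, integrableOn_pow_mul_exp_neg_mul_Ioi k one_pos⟩
  · simp [g_neg]
  · refine IsBigO.of_bound 1 ((eventually_ge_atTop 0).mono fun z hz => ?_)
    simp only [Pi.mul_apply, one_mul, norm_mul, norm_of_nonneg (exp_pos _).le,
      norm_of_nonneg (g_nonneg z)]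
    exact mul_le_mul_of_nonneg_left (by simpa using g_le_exp_neg z) (norm_nonneg _)

lemma hasSum_integral_Ioi_pow_mul_g {k : ℕ} (hk : 2 ≤ k) :
    HasSum (fun n : ℕ => k ! * ((-1) ^ (n + 1) / (n : ℝ) ^ k))
      (∫ z in Ioi 0, z ^ k * g z) := by
  -- the Mellin transform of `∑ aₙ e^{-n t}` at `s` is `Γ(s) ∑ aₙ / n^s`
  have hmellin := hasSum_mellin (a := fun n : ℕ => ((-1) ^ (n + 1) * n : ℂ)) (p := fun n => n)
    (F := fun t => (g t : ℂ)) (s := k + 1) (fun n => ?_) (by simp; positivity) (fun t ht => ?_) ?_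
  · rw [← Complex.hasSum_ofReal]
    convert hmellin using 1
    · ext n
      rw [Complex.Gamma_nat_eq_factorial, ← Nat.cast_add_one, Complex.cpow_natCast, pow_succ]
      rcases n.eq_zero_or_pos with rfl | hn
      · simp [show k ≠ 0 by omega]
      · have : (n : ℂ) ≠ 0 := by exact_mod_cast hn.ne'
        push_cast
        field_simp
        ring
    · rw [mellin, ← integral_complex_ofReal]
      refine setIntegral_congr_fun measurableSet_Ioi fun t ht => ?_
      rw [add_sub_cancel_right, Complex.cpow_natCast, smul_eq_mul]
      push_cast
      rfl
  · rcases n.eq_zero_or_pos with rfl | hn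
    · simp
    · exact Or.inr (by exact_mod_cast hn)
  · exact_mod_cast Complex.hasSum_ofReal.mpr (hasSum_g ht)
  · refine (Real.summable_one_div_nat_pow.mpr hk).congr fun n => ?_
    rw [Complex.add_re, Complex.natCast_re, Complex.one_re, ← Nat.cast_add_one, rpow_natCast,
      norm_mul, norm_pow, norm_neg, norm_one, one_pow, one_mul, Complex.norm_natCast, pow_succ]
    rcases n.eq_zero_or_pos with rfl | hn
    · simp [show k ≠ 0 by omega]
    · have : (n : ℝ) ≠ 0 := by exact_mod_cast hn.ne'
      field_simp

lemma integral_pow_mul_g_of_even {k : ℕ} {S : ℝ} (hk : Even k) (hk2 : 2 ≤ k)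
    (hS : HasSum (fun n : ℕ => 1 / (n : ℝ) ^ k) S) :
    ∫ z, z ^ k * g z = 2 * k ! * (S - 2 * (S / 2 ^ k)) := by
  have hIoi := (hasSum_integral_Ioi_pow_mul_g hk2).unique
    ((hasSum_neg_one_pow_succ_div_pow hS).mul_left _)
  have hsymm (z : ℝ) : z ^ k * g z = |z| ^ k * g |z| := by
    rcases abs_choice z with h | h <;> simp [h, g_neg, hk.neg_pow]
  rw [funext hsymm, integral_comp_abs (f := fun z => z ^ k * g z), hIoi]
  ring

lemma integral_pow_four_mul_g : ∫ z, z ^ 4 * g z = 7 * π ^ 4 / 15 := by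
  rw [integral_pow_mul_g_of_even ⟨2, rfl⟩ le_add_self hasSum_zeta_four]
  norm_num [Nat.factorial]
  ring

lemma integral_pow_six_mul_g : ∫ z, z ^ 6 * g z = 31 * π ^ 6 / 21 := by
  rw [integral_pow_mul_g_of_even ⟨3, rfl⟩ le_add_self hasSum_zeta_six]
  norm_num [Nat.factorial]
  ring

lemma integral_mul_g_eq_zero_of_odd {h : ℝ → ℝ} (hh : ∀ z, h (-z) = -h z) :
    ∫ z, h z * g z = 0 := by
  have := integral_neg_eq_self (fun z => h z * g z) volume
  simp only [hh, g_neg, neg_mul, integral_neg] at this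
  linarith

theorem stmt15 (α β : ℝ) :
    ∫ z : ℝ, z ^ 3 * f z α β =
      -(98 * π ^ 4 * α + 310 * π ^ 6 * β) /
        (210 + 35 * π ^ 2 * α ^ 2 + 98 * π ^ 4 * α * β + 155 * π ^ 6 * β ^ 2) := by
  have hpow := integrable_pow_mul_g
  have hodd : Integrable fun z =>
      (2 * z ^ 3 + α ^ 2 * z ^ 5 + 2 * α * β * z ^ 7 + β ^ 2 * z ^ 9) * g z := by
    simp only [add_mul, mul_assoc]
    fun_prop
  have hexpand (z : ℝ) : z ^ 3 * f z α β =
      ((2 * z ^ 3 + α ^ 2 * z ^ 5 + 2 * α * β * z ^ 7 + β ^ 2 * z ^ 9) * g z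
        - (2 * α * (z ^ 4 * g z) + 2 * β * (z ^ 6 * g z))) / C α β := by
    unfold f; ring
  simp_rw [hexpand]
  rw [integral_div, integral_sub hodd (by fun_prop), integral_add (by fun_prop) (by fun_prop),
    integral_const_mul, integral_const_mul, integral_mul_g_eq_zero_of_odd (fun z => by ring),
    integral_pow_four_mul_g, integral_pow_six_mul_g, C, div_div_eq_mul_div]
  ring
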